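/- Let |ψ⟩ = √r|00⟩ + √(1−r)|11⟩ and let U_A = e^{iφ_A}(a₀𝟙 + i a₁X + i a₂Y + i a₃Z) ⊗ 𝟙 and V_B = 𝟙 ⊗ e^{iφ_B}(b₀𝟙 + i b₁X + i b₂Y + i b₃Z) with real coefficients satisfying Σaᵢ²=Σbᵢ²=1 be local unitaries, and P⊥ = 𝟙−|ψ⟩⟨ψ|. Then |⟨ψ|U_A† P⊥ V_B|ψ⟩| = 2√(r(1−r)) · |a₁b₁ − a₂b₂ + 2√(r(1−r)) a₃b₃|. -/

import Mathlib

/-! Since `P⊥ = 1 - |ψ⟩⟨ψ|`, the amplitude is the covariance `⟨A ⊗ B⟩ - ⟨A ⊗ 1⟩⟨1 ⊗ B⟩` of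
`A = U_A†` and `B = V_B` in `|ψ⟩`; it is bilinear, so the global phases only contribute a factor of
modulus one. For a Schmidt state `s|00⟩ + c|11⟩` with `s² + c² = 1` the covariance is
`sc (A₀₁B₀₁ + A₁₀B₁₀) + s²c² (A₀₀ - A₁₁)(B₀₀ - B₁₁)`, and for the Pauli combinations the
off-diagonal part gives `2 (a₁b₁ - a₂b₂)` while the diagonal part gives `4 a₃b₃`. -/

open Matrix Kronecker

section Expectation

variable {n R : Type*} [Fintype n] [CommRing R] [StarRing R]

def expectation (ψ : n → R) (M : Matrix n n R) : R := star ψ ⬝ᵥ (M *ᵥ ψ)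

theorem expectation_smul (ψ : n → R) (x : R) (M : Matrix n n R) :
    expectation ψ (x • M) = x * expectation ψ M := by
  rw [expectation, smul_mulVec, dotProduct_smul, smul_eq_mul, expectation]

theorem expectation_smul_mul_smul_sub (ψ : n → R) (x y : R) (M N : Matrix n n R) :
    expectation ψ ((x • M) * (y • N)) - expectation ψ (x • M) * expectation ψ (y • N) =
      x * y * (expectation ψ (M * N) - expectation ψ M * expectation ψ N) := by
  rw [smul_mul_smul, expectation_smul, expectation_smul, expectation_smul]
  ring

theorem vecMulVec_star_mulVec (ψ w : n → R) :
    vecMulVec ψ (star ψ) *ᵥ w = (star ψ ⬝ᵥ w) • ψ := by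
  ext i
  simp only [mulVec, dotProduct, vecMulVec_apply, Pi.smul_apply, smul_eq_mul, Finset.sum_mul]
  exact Finset.sum_congr rfl fun j _ => by ring

theorem expectation_mul_orthProj_mul [DecidableEq n] (ψ : n → R) (M N : Matrix n n R) :
    expectation ψ (M * (1 - vecMulVec ψ (star ψ)) * N) =
      expectation ψ (M * N) - expectation ψ M * expectation ψ N := by
  simp only [expectation, ← mulVec_mulVec, sub_mulVec, one_mulVec, vecMulVec_star_mulVec,
    mulVec_sub, mulVec_smul, dotProduct_sub, dotProduct_smul, smul_eq_mul]
  ring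

end Expectation

def schmidtState (s c : ℝ) : Fin 2 × Fin 2 → ℂ :=
  fun p => if p = (0, 0) then (s : ℂ) else if p = (1, 1) then (c : ℂ) else 0

theorem expectation_schmidtState_kronecker (s c : ℝ) (A B : Matrix (Fin 2) (Fin 2) ℂ) :
    expectation (schmidtState s c) (A ⊗ₖ B) =
      s ^ 2 * A 0 0 * B 0 0 + s * c * (A 0 1 * B 0 1 + A 1 0 * B 1 0) +
        c ^ 2 * A 1 1 * B 1 1 := by
  simp only [expectation, dotProduct, Pi.star_apply, schmidtState, RCLike.star_def, mulVec,
    kroneckerMap_apply, mul_ite, mul_zero, Fintype.sum_prod_type, Prod.mk.injEq, Fin.sum_univ_two,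
    and_true, zero_ne_one, and_false, ↓reduceIte, one_ne_zero, add_zero, zero_add,
    Complex.conj_ofReal, map_zero, zero_mul]
  ring

theorem expectation_schmidtState_kronecker_sub {s c : ℝ} (hsc : s ^ 2 + c ^ 2 = 1)
    (A B : Matrix (Fin 2) (Fin 2) ℂ) :
    expectation (schmidtState s c) (A ⊗ₖ B) -
        expectation (schmidtState s c) (A ⊗ₖ 1) * expectation (schmidtState s c) (1 ⊗ₖ B) =
      s * c * (A 0 1 * B 0 1 + A 1 0 * B 1 0) +
        s ^ 2 * c ^ 2 * (A 0 0 - A 1 1) * (B 0 0 - B 1 1) := by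
  have hsc' : (s : ℂ) ^ 2 + (c : ℂ) ^ 2 = 1 := by exact_mod_cast hsc
  simp only [expectation_schmidtState_kronecker, one_apply_eq, one_apply_ne zero_ne_one,
    one_apply_ne one_ne_zero]
  linear_combination -(A 0 0 * B 0 0 * s ^ 2 + A 1 1 * B 1 1 * c ^ 2) * hsc'

def pauliX : Matrix (Fin 2) (Fin 2) ℂ := !![0, 1; 1, 0]
def pauliY : Matrix (Fin 2) (Fin 2) ℂ := !![0, -Complex.I; Complex.I, 0]
def pauliZ : Matrix (Fin 2) (Fin 2) ℂ := !![1, 0; 0, -1]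

def pauliComb (a₀ a₁ a₂ a₃ : ℝ) : Matrix (Fin 2) (Fin 2) ℂ :=
  (a₀ : ℂ) • 1 + ((a₁ : ℂ) * Complex.I) • pauliX + ((a₂ : ℂ) * Complex.I) • pauliY +
    ((a₃ : ℂ) * Complex.I) • pauliZ

theorem pauliComb_eq (a₀ a₁ a₂ a₃ : ℝ) :
    pauliComb a₀ a₁ a₂ a₃ =
      !![a₀ + a₃ * Complex.I, a₂ + a₁ * Complex.I; a₁ * Complex.I - a₂, a₀ - a₃ * Complex.I] := by
  ext i j
  fin_cases i <;> fin_cases j <;>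
    simp [pauliComb, pauliX, pauliY, pauliZ, mul_assoc] <;> ring

theorem expectation_schmidtState_pauliComb_sub {s c : ℝ} (hsc : s ^ 2 + c ^ 2 = 1)
    (a₀ a₁ a₂ a₃ b₀ b₁ b₂ b₃ : ℝ) :
    expectation (schmidtState s c) ((pauliComb a₀ a₁ a₂ a₃)ᴴ ⊗ₖ pauliComb b₀ b₁ b₂ b₃) -
        expectation (schmidtState s c) ((pauliComb a₀ a₁ a₂ a₃)ᴴ ⊗ₖ 1) *
          expectation (schmidtState s c) (1 ⊗ₖ pauliComb b₀ b₁ b₂ b₃) =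
      ((2 * (s * c) * (a₁ * b₁ - a₂ * b₂ + 2 * (s * c) * a₃ * b₃) : ℝ) : ℂ) := by
  rw [expectation_schmidtState_kronecker_sub hsc, pauliComb_eq, pauliComb_eq]
  simp only [conjTranspose_apply, of_apply, cons_val', cons_val_zero, cons_val_fin_one,
    cons_val_one, star_sub, star_add, star_mul', RCLike.star_def, Complex.conj_ofReal,
    Complex.conj_I]
  push_cast
  linear_combination (-2 * s * c * a₁ * b₁ - 4 * s ^ 2 * c ^ 2 * a₃ * b₃ : ℂ) * Complex.I_sq

theorem stmt_6_general (r : ℝ) (hr0 : 0 ≤ r) (hr1 : r ≤ 1)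
    (φA φB a₀ a₁ a₂ a₃ b₀ b₁ b₂ b₃ : ℝ)
    (X Y Z : Matrix (Fin 2) (Fin 2) ℂ)
    (hX : X = !![0, 1; 1, 0]) (hY : Y = !![0, -Complex.I; Complex.I, 0])
    (hZ : Z = !![1, 0; 0, -1])
    (U V : Matrix (Fin 2) (Fin 2) ℂ)
    (hU : U = Complex.exp (Complex.I * φA) •
      ((a₀ : ℂ) • (1 : Matrix (Fin 2) (Fin 2) ℂ) +
        ((a₁ : ℂ) * Complex.I) • X + ((a₂ : ℂ) * Complex.I) • Y +
        ((a₃ : ℂ) * Complex.I) • Z))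
    (hV : V = Complex.exp (Complex.I * φB) •
      ((b₀ : ℂ) • (1 : Matrix (Fin 2) (Fin 2) ℂ) +
        ((b₁ : ℂ) * Complex.I) • X + ((b₂ : ℂ) * Complex.I) • Y +
        ((b₃ : ℂ) * Complex.I) • Z))
    (ψ : Fin 2 × Fin 2 → ℂ)
    (hψ : ψ = fun p => if p = (0, 0) then (Real.sqrt r : ℂ)
                       else if p = (1, 1) then (Real.sqrt (1 - r) : ℂ) else 0)
    (P : Matrix (Fin 2 × Fin 2) (Fin 2 × Fin 2) ℂ)
    (hP : P = 1 - Matrix.vecMulVec ψ (star ψ)) :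
    ‖(star ψ ⬝ᵥ
        (((U ⊗ₖ (1 : Matrix (Fin 2) (Fin 2) ℂ))ᴴ * P *
          ((1 : Matrix (Fin 2) (Fin 2) ℂ) ⊗ₖ V)) *ᵥ ψ))‖ =
      2 * Real.sqrt (r * (1 - r)) *
        |a₁ * b₁ - a₂ * b₂ + 2 * Real.sqrt (r * (1 - r)) * a₃ * b₃| := by
  subst hX hY hZ hP
  obtain rfl : ψ = schmidtState √r √(1 - r) := hψ
  obtain rfl : U = Complex.exp (Complex.I * φA) • pauliComb a₀ a₁ a₂ a₃ := hU
  obtain rfl : V = Complex.exp (Complex.I * φB) • pauliComb b₀ b₁ b₂ b₃ := hV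
  have hsc : √r ^ 2 + √(1 - r) ^ 2 = 1 := by
    rw [Real.sq_sqrt hr0, Real.sq_sqrt (sub_nonneg.mpr hr1)]
    ring
  have hphase (φ : ℝ) : ‖Complex.exp (Complex.I * φ)‖ = 1 := by
    rw [mul_comm, Complex.norm_exp_ofReal_mul_I]
  change ‖expectation _ _‖ = _
  rw [conjTranspose_kronecker, conjTranspose_one, conjTranspose_smul, smul_kronecker,
    kronecker_smul, expectation_mul_orthProj_mul, expectation_smul_mul_smul_sub,
    ← mul_kronecker_mul, mul_one, one_mul, expectation_schmidtState_pauliComb_sub hsc,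
    norm_mul, norm_mul, norm_star, hphase, hphase, Complex.norm_real, Real.norm_eq_abs,
    ← Real.sqrt_mul hr0, abs_mul, abs_of_nonneg (by positivity : (0 : ℝ) ≤ 2 * √(r * (1 - r))), one_mul, one_mul]

/-- With the Pauli parametrization of local unitaries,
|⟨ψ|U_A† P⊥ V_B|ψ⟩| = 2√(r(1−r))·|a₁b₁ − a₂b₂ + 2√(r(1−r))a₃b₃|. -/
theorem stmt_6 (r : ℝ) (hr0 : 0 ≤ r) (hr1 : r ≤ 1)
    (φA φB a₀ a₁ a₂ a₃ b₀ b₁ b₂ b₃ : ℝ)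
    (ha : a₀ ^ 2 + a₁ ^ 2 + a₂ ^ 2 + a₃ ^ 2 = 1)
    (hb : b₀ ^ 2 + b₁ ^ 2 + b₂ ^ 2 + b₃ ^ 2 = 1)
    (X Y Z : Matrix (Fin 2) (Fin 2) ℂ)
    (hX : X = !![0, 1; 1, 0]) (hY : Y = !![0, -Complex.I; Complex.I, 0])
    (hZ : Z = !![1, 0; 0, -1])
    (U V : Matrix (Fin 2) (Fin 2) ℂ)
    (hU : U = Complex.exp (Complex.I * φA) •
      ((a₀ : ℂ) • (1 : Matrix (Fin 2) (Fin 2) ℂ) +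
        ((a₁ : ℂ) * Complex.I) • X + ((a₂ : ℂ) * Complex.I) • Y +
        ((a₃ : ℂ) * Complex.I) • Z))
    (hV : V = Complex.exp (Complex.I * φB) •
      ((b₀ : ℂ) • (1 : Matrix (Fin 2) (Fin 2) ℂ) +
        ((b₁ : ℂ) * Complex.I) • X + ((b₂ : ℂ) * Complex.I) • Y +
        ((b₃ : ℂ) * Complex.I) • Z))
    (ψ : Fin 2 × Fin 2 → ℂ)
    (hψ : ψ = fun p => if p = (0, 0) then (Real.sqrt r : ℂ)
                       else if p = (1, 1) then (Real.sqrt (1 - r) : ℂ) else 0)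
    (P : Matrix (Fin 2 × Fin 2) (Fin 2 × Fin 2) ℂ)
    (hP : P = 1 - Matrix.vecMulVec ψ (star ψ)) :
    ‖(star ψ ⬝ᵥ
        (((U ⊗ₖ (1 : Matrix (Fin 2) (Fin 2) ℂ))ᴴ * P *
          ((1 : Matrix (Fin 2) (Fin 2) ℂ) ⊗ₖ V)) *ᵥ ψ))‖ =
      2 * Real.sqrt (r * (1 - r)) *
        |a₁ * b₁ - a₂ * b₂ + 2 * Real.sqrt (r * (1 - r)) * a₃ * b₃| :=
  stmt_6_general r hr0 hr1 φA φB a₀ a₁ a₂ a₃ b₀ b₁ b₂ b₃ X Y Z hX hY hZ U V hU hV ψ hψ P hP
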